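/- arXiv:1004.4019 — 3 statements merged into one kernel-verified Lean document; each statement's English description precedes it below -/
import Mathlib

section
/- For any finite convex collection 𝐏 of bitiles, the union ⋃_{P∈𝐏} P of the bitiles in 𝐏 can be written as a disjoint union of tiles. -/
open MeasureTheory Set ENNReal NNReal

noncomputable section

namespace Quartile

/-- The Walsh functions on `[0,1)` (extended by zero), in Walsh-Paley order,
defined by the recursion `W_{2l} = W_l(2x) + W_l(2x-1)`, `W_{2l+1} = W_l(2x) - W_l(2x-1)`. -/
def walsh (n : ℕ) (x : ℝ) : ℝ :=
  if h : n = 0 then (if 0 ≤ x ∧ x < 1 then 1 else 0)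
  else if n % 2 = 0 then walsh (n / 2) (2 * x) + walsh (n / 2) (2 * x - 1)
  else walsh (n / 2) (2 * x) - walsh (n / 2) (2 * x - 1)
termination_by n
decreasing_by
  all_goals exact Nat.div_lt_self (Nat.pos_of_ne_zero h) one_lt_two

/-- The dyadic interval `[2^k n, 2^k (n+1)) ⊆ [0,∞)`. -/
def dyadicI (k : ℤ) (n : ℕ) : Set ℝ := Ico ((2:ℝ)^k * n) ((2:ℝ)^k * (n+1))

/-- A tile: the dyadic rectangle `[2^k n, 2^k(n+1)) × [2^{-k} l, 2^{-k}(l+1))` of area one. -/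
structure Tile where
  k : ℤ
  n : ℕ
  l : ℕ

namespace Tile

/-- The time interval `I_p` of a tile. -/
def timeI (p : Tile) : Set ℝ := Ico ((2:ℝ)^p.k * p.n) ((2:ℝ)^p.k * (p.n+1))

/-- The frequency interval `ω_p` of a tile. -/
def freqI (p : Tile) : Set ℝ := Ico ((2:ℝ)^(-p.k) * p.l) ((2:ℝ)^(-p.k) * (p.l+1))

/-- The tile as a subset of the phase plane. -/
def toSet (p : Tile) : Set (ℝ × ℝ) := p.timeI ×ˢ p.freqI

/-- The Walsh wave packet `w_p` of a tile, `L²`-normalized. -/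
def wp (p : Tile) (x : ℝ) : ℝ :=
  Real.sqrt ((2:ℝ)^(-p.k)) * walsh p.l ((2:ℝ)^(-p.k) * x - p.n)

end Tile

/-- The order on dyadic rectangles: `p ≤ q` iff `I_p ⊆ I_q` and `ω_q ⊆ ω_p`, for tiles. -/
def tileLE (p q : Tile) : Prop := p.timeI ⊆ q.timeI ∧ q.freqI ⊆ p.freqI

/-- The inner product `⟨f, w_p⟩` of a function with a (real valued) wave packet. -/
def coef (f : ℝ → ℂ) (p : Tile) : ℂ := ∫ x, f x * (p.wp x : ℂ)

/-- The rank one projection `Π_p f = ⟨f, w_p⟩ w_p` associated to a single tile. -/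
def projT (p : Tile) (f : ℝ → ℂ) (x : ℝ) : ℂ := coef f p * (p.wp x : ℂ)

/-- The projection associated to a collection of (pairwise disjoint) tiles. -/
def projSet (𝔭 : Set Tile) (f : ℝ → ℂ) (x : ℝ) : ℂ := ∑' p : 𝔭, projT p f x

/-- The maximal tiles contained in a subset `S` of the phase plane; when `S` is a disjoint
union of tiles (of the kind appearing below) these form the canonical tiling of `S`. -/
def maxTiles (S : Set (ℝ × ℝ)) : Set Tile :=
  {p | p.toSet ⊆ S ∧ ∀ q : Tile, q.toSet ⊆ S → tileLE p q → q = p}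

/-- The phase plane projection `Π_S` associated to a subset `S` of the phase plane,
computed with the canonical tiling of `S` by maximal tiles (the projection is independent
of the chosen tiling). -/
def piProj (S : Set (ℝ × ℝ)) (f : ℝ → ℂ) (x : ℝ) : ℂ := projSet (maxTiles S) f x

/-- A bitile: the dyadic rectangle `[2^k n, 2^k(n+1)) × [2^{1-k} l, 2^{1-k}(l+1))` of area two. -/
structure Bitile where
  k : ℤ
  n : ℕ
  l : ℕ

namespace Bitile

/-- The time interval `I_P` of a bitile. -/
def timeI (P : Bitile) : Set ℝ := Ico ((2:ℝ)^P.k * P.n) ((2:ℝ)^P.k * (P.n+1))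

/-- The frequency interval `ω_P` of a bitile. -/
def freqI (P : Bitile) : Set ℝ := Ico ((2:ℝ)^(1-P.k) * P.l) ((2:ℝ)^(1-P.k) * (P.l+1))

/-- The bitile as a subset of the phase plane. -/
def toSet (P : Bitile) : Set (ℝ × ℝ) := P.timeI ×ˢ P.freqI

/-- The lower tile `P_d` of a bitile. -/
def d (P : Bitile) : Tile := ⟨P.k, P.n, 2*P.l⟩

/-- The upper tile `P_u` of a bitile. -/
def u (P : Bitile) : Tile := ⟨P.k, P.n, 2*P.l+1⟩

/-- The left tile of a bitile. -/
def left (P : Bitile) : Tile := ⟨P.k-1, 2*P.n, P.l⟩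

/-- The right tile of a bitile. -/
def right (P : Bitile) : Tile := ⟨P.k-1, 2*P.n+1, P.l⟩

/-- The `L^∞`-normalized wave packet `φ_{P_d} = |I_P|^{1/2} w_{P_d}`. -/
def phid (P : Bitile) (x : ℝ) : ℝ := Real.sqrt ((2:ℝ)^P.k) * P.d.wp x

end Bitile

/-- The order on dyadic rectangles, for bitiles. -/
def bitileLE (P Q : Bitile) : Prop := P.timeI ⊆ Q.timeI ∧ Q.freqI ⊆ P.freqI

/-- Strict order on bitiles. -/
def bitileLT (P Q : Bitile) : Prop := bitileLE P Q ∧ P ≠ Q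

/-- A collection of bitiles is convex if together with `P₁ < P < P₂` for `P₁, P₂` in the
collection it contains `P`. -/
def IsConvex (PP : Set Bitile) : Prop :=
  ∀ P1 P2 P : Bitile, P1 ∈ PP → P2 ∈ PP → bitileLT P1 P → bitileLT P P2 → P ∈ PP

/-- A tree: a collection of bitiles with a (unique) maximal element `P_T = I_T × ω_T`. -/
structure Tree where
  carrier : Set Bitile
  top : Bitile
  top_mem : top ∈ carrier
  le_top : ∀ P ∈ carrier, bitileLE P top

namespace Tree

/-- `T_d`: those bitiles of the tree whose lower tile frequency interval contains `ω_T`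
(in the paper's notation, `P_T ≤ P_d`). -/
def Td (T : Tree) : Set Bitile := {P | P ∈ T.carrier ∧ T.top.freqI ⊆ P.d.freqI}

/-- `T_u`: those bitiles of the tree whose upper tile frequency interval contains `ω_T`
(in the paper's notation, `P_T ≤ P_u`). -/
def Tu (T : Tree) : Set Bitile := {P | P ∈ T.carrier ∧ T.top.freqI ⊆ P.u.freqI}

/-- The region `⋃_{P ∈ T} P` of the phase plane occupied by a tree. -/
def unionSet (T : Tree) : Set (ℝ × ℝ) := ⋃ P ∈ T.carrier, P.toSet

/-- The phase plane projection `Π_T` of a (convex) tree. -/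
def proj (T : Tree) (f : ℝ → ℂ) : ℝ → ℂ := piProj T.unionSet f

end Tree

/-- The vertical dilation `2^L S` of a subset of the phase plane. -/
def dilate (L : ℕ) (S : Set (ℝ × ℝ)) : Set (ℝ × ℝ) := (fun q => (q.1, (2:ℝ)^L * q.2)) '' S

/-- The enlarged tree `T^{(L)}` with respect to a frequency `ξ ∈ ω_T`: all bitiles `P` with
`2^L ξ ∈ ω_P` contained in a rectangle `2^L P'` with `P' ∈ T`. -/
def Tree.enlarged (L : ℕ) (T : Tree) (ξ : ℝ) : Set Bitile :=
  {P | (2:ℝ)^L * ξ ∈ P.freqI ∧ ∃ P' ∈ T.carrier, P.toSet ⊆ dilate L P'.toSet}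

/-- The region of the phase plane occupied by the enlarged tree `T^{(L)}`. -/
def Tree.enlargedSet (L : ℕ) (T : Tree) (ξ : ℝ) : Set (ℝ × ℝ) :=
  ⋃ P ∈ T.enlarged L ξ, P.toSet

/-- The left endpoint of `ω_T`, a canonical choice of `ξ ∈ ω_T`. -/
def Tree.xiTop (T : Tree) : ℝ := (2:ℝ)^(1-T.top.k) * T.top.l

/-- The phase plane projection `Π_{T^{(L)}}` of the enlarged tree (independent of the
choice of `ξ ∈ ω_T`; we use the canonical choice).  For `L = 0` this is `Π_T`. -/
def Tree.projL (L : ℕ) (T : Tree) (f : ℝ → ℂ) : ℝ → ℂ := piProj (T.enlargedSet L T.xiTop) f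

/-- `size^{(L)}(PP, f) = sup |I_T|^{-1/2} ‖Π_{T^{(L)}} f‖₂`, the supremum over convex trees
`T ⊆ PP`.  For `L = 0` this is the plain `size(PP, f)`. -/
def size (L : ℕ) (PP : Set Bitile) (f : ℝ → ℂ) : ℝ≥0∞ :=
  ⨆ (T : Tree) (_ : T.carrier ⊆ PP ∧ IsConvex T.carrier),
    (ENNReal.ofReal (Real.sqrt ((2:ℝ)^T.top.k)))⁻¹ * eLpNorm (T.projL L f) 2 volume

/-- The quartile form `Λ_{PP}` restricted to a collection `PP` of bitiles. -/
def quartileFormOn (L : ℕ) (PP : Set Bitile) (f1 f2 f3 : ℝ → ℂ) : ℂ :=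
  ∫ x, ∑' P : PP, (P.1.phid x : ℂ) * projT P.1.u f1 x *
      piProj (dilate L P.1.d.toSet) f2 x * piProj (dilate L P.1.d.toSet) f3 x

/-- The bitiles contained in the strip `ℝ₊ × [0, 2^N)`. -/
def stripBitiles (N : ℕ) : Set Bitile := {P | P.freqI ⊆ Ico (0:ℝ) ((2:ℝ)^N)}

/-- The quartile form `Λ_L` (with frequency truncation parameter `N`). -/
def quartileForm (L N : ℕ) (f1 f2 f3 : ℝ → ℂ) : ℂ :=
  quartileFormOn L (stripBitiles N) f1 f2 f3

/-- The quartile form perturbed by a bounded sequence of coefficients `c_P`. -/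
def quartileFormC (L N : ℕ) (c : Bitile → ℂ) (f1 f2 f3 : ℝ → ℂ) : ℂ :=
  ∫ x, ∑' P : stripBitiles N, c P.1 * (P.1.phid x : ℂ) * projT P.1.u f1 x *
      piProj (dilate L P.1.d.toSet) f2 x * piProj (dilate L P.1.d.toSet) f3 x

/-- The counting function `Σ_{T ∈ 𝕋} 1_{I_T}` of a collection of trees. -/
def countingFn (𝕋 : Set Tree) (x : ℝ) : ℝ≥0∞ :=
  ∑' T : 𝕋, (T.1.top.timeI).indicator (fun _ => (1:ℝ≥0∞)) x

/-- The average of an `ℝ≥0∞`-valued function over a set. -/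
def avgOn (I : Set ℝ) (g : ℝ → ℝ≥0∞) : ℝ≥0∞ := (volume I)⁻¹ * ∫⁻ x in I, g x

/-- The dyadic BMO norm on `[0,∞)` of an `ℝ≥0∞`-valued function. -/
def dyadicBMO (g : ℝ → ℝ≥0∞) : ℝ≥0∞ :=
  ⨆ (k : ℤ) (n : ℕ), avgOn (dyadicI k n)
    (fun x => (g x - avgOn (dyadicI k n) g) + (avgOn (dyadicI k n) g - g x))

/-- The dyadic Hardy-Littlewood maximal function on `[0,∞)`. -/
def dyadicMax (f : ℝ → ℂ) (x : ℝ) : ℝ≥0∞ :=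
  ⨆ (k : ℤ) (n : ℕ) (_ : x ∈ dyadicI k n),
    (volume (dyadicI k n))⁻¹ * ∫⁻ y in dyadicI k n, ‖f y‖₊

/-- The dyadic interval of length `2^j` containing `y ≥ 0`. -/
def freqInterval (j : ℤ) (y : ℝ) : Set ℝ :=
  Ico ((2:ℝ)^j * ⌊y / (2:ℝ)^j⌋) ((2:ℝ)^j * (⌊y / (2:ℝ)^j⌋ + 1))

/-- The projection `Π_l := Π_{I_T × ω_l}`, where `ω_l` is the dyadic interval of
length `2^l` containing the frequency `y`. -/
def PiScale (T : Tree) (j : ℤ) (y : ℝ) (f : ℝ → ℂ) : ℝ → ℂ :=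
  piProj (T.top.timeI ×ˢ freqInterval j y) f

/-- The difference projection `Π_l^Δ = Π_l - Π_{l-1}`. -/
def PiDelta (T : Tree) (j : ℤ) (y : ℝ) (f : ℝ → ℂ) (x : ℝ) : ℂ :=
  PiScale T j y f x - PiScale T (j-1) y f x

/-!
Induct on the number of bitiles, removing a bitile `P` of minimal scale `P.k`; the remaining
collection is still convex, hence a disjoint union of tiles. Each half `P_d`, `P_u` of `P` either
lies inside the union of the remaining bitiles or misses it: if it meets a remaining `Q`, then
`Q` has larger scale, and the bitile with the frequency interval of that half and twice its time
interval lies between `P` and `Q`, so it is in the collection by convexity and covers the half.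
Adding the halves that miss the rest completes the tiling.
-/

lemma mem_dyadicI_iff {k : ℤ} {n : ℕ} {x : ℝ} :
    x ∈ dyadicI k n ↔ 0 ≤ x ∧ ⌊x / 2 ^ k⌋₊ = n := by
  have h2k : (0 : ℝ) < 2 ^ k := zpow_pos two_pos k
  constructor
  · rintro ⟨h1, h2⟩
    have hx : 0 ≤ x := le_trans (by positivity) h1
    refine ⟨hx, (Nat.floor_eq_iff (by positivity)).2 ⟨?_, ?_⟩⟩
    · rwa [le_div_iff₀ h2k, mul_comm]
    · rwa [div_lt_iff₀ h2k, mul_comm]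
  · rintro ⟨hx, h⟩
    obtain ⟨h1, h2⟩ := (Nat.floor_eq_iff (by positivity)).1 h
    exact ⟨by rwa [le_div_iff₀ h2k, mul_comm] at h1,
      by rwa [div_lt_iff₀ h2k, mul_comm] at h2⟩

lemma floor_div_two_zpow_add (x : ℝ) (k : ℤ) (m : ℕ) :
    ⌊x / 2 ^ (k + m)⌋₊ = ⌊x / 2 ^ k⌋₊ / 2 ^ m := by
  rw [zpow_add₀ two_ne_zero, zpow_natCast, ← div_div, ← Nat.floor_div_natCast, Nat.cast_pow,
    Nat.cast_ofNat]

lemma dyadicI_nonempty (k : ℤ) (n : ℕ) : (dyadicI k n).Nonempty :=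
  nonempty_Ico.2 (mul_lt_mul_of_pos_left (lt_add_one _) (zpow_pos two_pos k))

lemma le_of_dyadicI_subset {k k' : ℤ} {n n' : ℕ} (h : dyadicI k n ⊆ dyadicI k' n') :
    k ≤ k' := by
  have hvol := measure_mono (μ := volume) h
  simp only [dyadicI, Real.volume_Ico] at hvol
  rw [ENNReal.ofReal_le_ofReal_iff (by ring_nf; positivity)] at hvol
  ring_nf at hvol
  exact (zpow_le_zpow_iff_right₀ _root_.one_lt_two).1 hvol

lemma eq_of_dyadicI_inter_nonempty {k : ℤ} {n n' : ℕ}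
    (h : (dyadicI k n ∩ dyadicI k n').Nonempty) : n = n' := by
  obtain ⟨x, hx, hx'⟩ := h
  exact (mem_dyadicI_iff.1 hx).2.symm.trans (mem_dyadicI_iff.1 hx').2

lemma dyadicI_subset_of_le {k k' : ℤ} {n n' : ℕ} (hk : k ≤ k')
    (h : (dyadicI k n ∩ dyadicI k' n').Nonempty) : dyadicI k n ⊆ dyadicI k' n' := by
  obtain ⟨m, rfl⟩ : ∃ m : ℕ, k' = k + m := ⟨(k' - k).toNat, by omega⟩
  obtain ⟨x, hx, hx'⟩ := h
  intro y hy
  rw [mem_dyadicI_iff, floor_div_two_zpow_add] at hx' ⊢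
  rw [mem_dyadicI_iff] at hx hy
  exact ⟨hy.1, by rw [hy.2, ← hx'.2, hx.2]⟩

lemma dyadicI_subset_succ_div_two (k : ℤ) (n : ℕ) :
    dyadicI k n ⊆ dyadicI (k + 1) (n / 2) := by
  intro x hx
  rw [mem_dyadicI_iff] at hx ⊢
  have := floor_div_two_zpow_add x k 1
  rw [Nat.cast_one, pow_one] at this
  rw [this, hx.2]
  exact ⟨hx.1, rfl⟩

lemma dyadicI_succ_eq_union (k : ℤ) (n : ℕ) :
    dyadicI (k + 1) n = dyadicI k (2 * n) ∪ dyadicI k (2 * n + 1) := by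
  ext x
  have := floor_div_two_zpow_add x k 1
  rw [Nat.cast_one, pow_one] at this
  simp only [mem_union, mem_dyadicI_iff, this]
  by_cases hx : 0 ≤ x
  · simp only [hx, true_and]
    omega
  · simp [hx]

attribute [ext] Bitile

namespace Bitile

lemma toSet_eq_union (P : Bitile) : P.toSet = P.d.toSet ∪ P.u.toSet := by
  change P.timeI ×ˢ dyadicI (1 - P.k) P.l =
    P.timeI ×ˢ dyadicI (-P.k) (2 * P.l) ∪ P.timeI ×ˢ dyadicI (-P.k) (2 * P.l + 1)
  rw [← prod_union, ← dyadicI_succ_eq_union, neg_add_eq_sub]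

lemma d_toSet_subset (P : Bitile) : P.d.toSet ⊆ P.toSet :=
  P.toSet_eq_union ▸ subset_union_left

lemma u_toSet_subset (P : Bitile) : P.u.toSet ⊆ P.toSet :=
  P.toSet_eq_union ▸ subset_union_right

lemma disjoint_d_u (P : Bitile) : Disjoint P.d.toSet P.u.toSet := by
  refine disjoint_prod.2 (Or.inr ?_)
  rw [disjoint_iff_inter_eq_empty, ← not_nonempty_iff_eq_empty]
  intro h
  have : 2 * P.l = 2 * P.l + 1 := eq_of_dyadicI_inter_nonempty (k := -P.k) h
  omega

lemma eq_of_k_eq_of_inter_nonempty {P Q : Bitile} (hk : P.k = Q.k)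
    (h : (P.toSet ∩ Q.toSet).Nonempty) : P = Q := by
  obtain ⟨⟨x, ξ⟩, ⟨hxP, hξP⟩, hxQ, hξQ⟩ := h
  obtain ⟨k, n, l⟩ := P
  obtain ⟨k', n', l'⟩ := Q
  dsimp only at hk
  subst hk
  ext
  · rfl
  · exact eq_of_dyadicI_inter_nonempty ⟨x, hxP, hxQ⟩
  · exact eq_of_dyadicI_inter_nonempty ⟨ξ, hξP, hξQ⟩

lemma k_lt_of_lt {P Q : Bitile} (h : bitileLT P Q) : P.k < Q.k := by
  obtain ⟨⟨ht, hf⟩, hne⟩ := h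
  refine (le_of_dyadicI_subset ht).lt_of_ne fun hk => hne (eq_of_k_eq_of_inter_nonempty hk ?_)
  obtain ⟨x, hx⟩ := dyadicI_nonempty P.k P.n
  obtain ⟨ξ, hξ⟩ := dyadicI_nonempty (1 - Q.k) Q.l
  exact ⟨(x, ξ), ⟨hx, hf hξ⟩, ht hx, hξ⟩

end Bitile

lemma IsConvex.of_insert {PP : Set Bitile} {P : Bitile} (h : IsConvex (insert P PP))
    (hP : ∀ Q ∈ PP, ¬ bitileLT Q P) : IsConvex PP := by
  intro P1 P2 Q h1 h2 hlt1 hlt2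
  obtain rfl | hQ := h P1 P2 Q (mem_insert_of_mem _ h1) (mem_insert_of_mem _ h2) hlt1 hlt2
  · exact absurd hlt1 (hP P1 h1)
  · exact hQ

namespace Tile

/-- The bitile of which `p` is the left or right tile. -/
def timeParent (p : Tile) : Bitile := ⟨p.k + 1, p.n / 2, p.l⟩

lemma timeI_subset_timeParent (p : Tile) : p.timeI ⊆ p.timeParent.timeI :=
  dyadicI_subset_succ_div_two p.k p.n

lemma freqI_timeParent (p : Tile) : p.timeParent.freqI = p.freqI := by
  change dyadicI (1 - (p.k + 1)) p.l = dyadicI (-p.k) p.l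
  congr 1
  ring

lemma toSet_subset_timeParent (p : Tile) : p.toSet ⊆ p.timeParent.toSet :=
  prod_mono p.timeI_subset_timeParent p.freqI_timeParent.ge

end Tile

lemma Bitile.lt_timeParent {P : Bitile} {p : Tile} (hpP : p.toSet ⊆ P.toSet) (hpk : p.k = P.k) :
    bitileLT P p.timeParent := by
  obtain ⟨x, hx⟩ := dyadicI_nonempty p.k p.n
  have hpf : p.freqI ⊆ P.freqI := fun ξ hξ => (hpP (mk_mem_prod hx hξ)).2
  obtain ⟨ξ, hξ⟩ := dyadicI_nonempty (-p.k) p.l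
  refine ⟨⟨dyadicI_subset_of_le (by simp [Tile.timeParent, hpk])
    ⟨x, (hpP (mk_mem_prod hx hξ)).1, p.timeI_subset_timeParent hx⟩,
    p.freqI_timeParent ▸ hpf⟩, fun h => ?_⟩
  have := congrArg Bitile.k h
  simp only [Tile.timeParent, hpk] at this
  omega

lemma IsConvex.timeParent_mem {PP : Set Bitile} (hPP : IsConvex PP) {P Q : Bitile}
    (hP : P ∈ PP) (hQ : Q ∈ PP) (hPQ : P.k < Q.k) {p : Tile} (hpP : p.toSet ⊆ P.toSet)
    (hpk : p.k = P.k) (hpQ : (p.toSet ∩ Q.toSet).Nonempty) : p.timeParent ∈ PP := by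
  obtain ⟨⟨x, ξ⟩, ⟨hxp, hξp⟩, hxQ, hξQ⟩ := hpQ
  have hRQ : bitileLE p.timeParent Q :=
    ⟨dyadicI_subset_of_le (by simp [Tile.timeParent]; omega)
      ⟨x, p.timeI_subset_timeParent hxp, hxQ⟩,
      p.freqI_timeParent ▸ dyadicI_subset_of_le (by omega) ⟨ξ, hξQ, hξp⟩⟩
  by_cases hRQ' : p.timeParent = Q
  · exact hRQ' ▸ hQ
  · exact hPP P Q _ hP hQ (Bitile.lt_timeParent hpP hpk) ⟨hRQ, hRQ'⟩

lemma IsConvex.subset_or_disjoint_of_insert {PP : Set Bitile} {P : Bitile}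
    (hconv : IsConvex (insert P PP)) (hP : P ∉ PP) (hmin : ∀ Q ∈ PP, P.k ≤ Q.k) {p : Tile}
    (hpP : p.toSet ⊆ P.toSet) (hpk : p.k = P.k) :
    p.toSet ⊆ ⋃ Q ∈ PP, Q.toSet ∨ Disjoint p.toSet (⋃ Q ∈ PP, Q.toSet) := by
  rw [or_iff_not_imp_right, not_disjoint_iff_nonempty_inter]
  rintro ⟨z, hzp, hzU⟩
  obtain ⟨Q, hQ, hzQ⟩ := mem_iUnion₂.1 hzU
  have hPQ : P.k < Q.k := (hmin Q hQ).lt_of_ne fun hk =>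
    hP (Bitile.eq_of_k_eq_of_inter_nonempty hk ⟨z, hpP hzp, hzQ⟩ ▸ hQ)
  have hR := hconv.timeParent_mem (mem_insert P PP) (mem_insert_of_mem P hQ) hPQ hpP hpk
    ⟨z, hzp, hzQ⟩
  exact p.toSet_subset_timeParent.trans (subset_biUnion_of_mem (u := Bitile.toSet)
    (hR.resolve_left (Bitile.lt_timeParent hpP hpk).2.symm))

def IsTileable (S : Set (ℝ × ℝ)) : Prop :=
  ∃ 𝔭 : Set Tile, 𝔭.PairwiseDisjoint Tile.toSet ∧ ⋃ p ∈ 𝔭, p.toSet = S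

lemma isTileable_empty : IsTileable ∅ :=
  ⟨∅, pairwiseDisjoint_empty, biUnion_empty _⟩

lemma IsTileable.tile_union {S : Set (ℝ × ℝ)} (hS : IsTileable S) {p : Tile}
    (hp : p.toSet ⊆ S ∨ Disjoint p.toSet S) : IsTileable (p.toSet ∪ S) := by
  rcases hp with hp | hp
  · rwa [union_eq_right.2 hp]
  obtain ⟨𝔭, h𝔭, rfl⟩ := hS
  exact ⟨insert p 𝔭, h𝔭.insert fun q hq _ => hp.mono_right (subset_biUnion_of_mem hq),
    biUnion_insert p 𝔭 Tile.toSet⟩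

/-- The union of a finite convex collection of bitiles is a disjoint union of tiles. -/
theorem convex_union_tiling :
    ∀ PP : Set Bitile, PP.Finite → IsConvex PP →
      ∃ 𝔭 : Set Tile, 𝔭.PairwiseDisjoint Tile.toSet ∧
        (⋃ p ∈ 𝔭, p.toSet) = ⋃ P ∈ PP, P.toSet := by
  intro PP hfin hconv
  classical
  lift PP to Finset Bitile using hfin
  induction PP using Finset.induction_on_min_value Bitile.k with
  | empty =>
    rw [Finset.coe_empty, biUnion_empty]
    exact isTileable_empty
  | insert P PP hP hmin ih =>
    rw [Finset.coe_insert] at hconv ⊢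
    have hS : IsTileable (⋃ Q ∈ (PP : Set Bitile), Q.toSet) :=
      ih (hconv.of_insert fun Q hQ hQP => (hmin Q hQ).not_gt (Bitile.k_lt_of_lt hQP))
    have hd := hconv.subset_or_disjoint_of_insert hP hmin P.d_toSet_subset rfl
    have hu := hconv.subset_or_disjoint_of_insert hP hmin P.u_toSet_subset rfl
    rw [biUnion_insert, P.toSet_eq_union, union_comm P.d.toSet, union_assoc]
    exact (hS.tile_union hd).tile_union
      (hu.imp (fun h => h.trans subset_union_right) P.disjoint_d_u.symm.union_right)

end Quartile
end
end

section
/- Let L ≥ 1 and let T be a tree with maximal element P_T = I_T × ω_T. (i) If T is convex, then for any ξ ∈ ω_T the enlarged tree T^{(L)} is convex and has a unique maximal element, namely the unique bitile P ∈ T^{(L)} with I_P = I_T. (ii) The set ⋃_{P ∈ T^{(L)}} P, and hence the phase plane projection Π_{T^{(L)}}, does not depend on the choice of the frequency ξ ∈ ω_T. -/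
open MeasureTheory Set ENNReal NNReal

noncomputable section

namespace Quartile

/-!
All bitiles involved share a frequency point (`ξ` for those of `T`, `2^L ξ` for those of
`T^{(L)}`), and dyadic intervals sharing a point are nested, so every inclusion reduces to a
comparison of scales. Each `2^L P'` with `P' ∈ T` is covered by the bitiles of scale
`|I_{P'}| / 2^L` with frequency interval `2^L ω_{P'} ∋ 2^L ξ`, all of which lie in `T^{(L)}`;
hence `⋃ T^{(L)} = ⋃_{P' ∈ T} 2^L P'` for every `ξ ∈ ω_T`. For convexity, given
`P₁ < P < P₂` in `T^{(L)}` with `P₁ ⊆ 2^L P₁'`, the bitile `Q` through `I_P × {ξ}` at the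
coarser of the scales of `P₁'` and `P` satisfies `P₁' ≤ Q ≤ P_T`, so `Q ∈ T`, and `P ⊆ 2^L Q`.
The bitile through `I_T × {2^L ξ}` lies in `T^{(L)}` and dominates it.
-/

lemma two_zpow_pos (k : ℤ) : (0:ℝ) < 2 ^ k := zpow_pos two_pos k

lemma nonneg_of_mem_dyadicI {k : ℤ} {n : ℕ} {x : ℝ} (hx : x ∈ dyadicI k n) : 0 ≤ x :=
  (mem_dyadicI_iff.1 hx).1

lemma mem_dyadicI_floor {x : ℝ} (hx : 0 ≤ x) (k : ℤ) : x ∈ dyadicI k ⌊x / 2 ^ k⌋₊ :=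
  mem_dyadicI_iff.2 ⟨hx, rfl⟩

lemma left_mem_dyadicI (k : ℤ) (n : ℕ) : (2:ℝ) ^ k * n ∈ dyadicI k n :=
  ⟨le_rfl, mul_lt_mul_of_pos_left (lt_add_one _) (two_zpow_pos k)⟩

lemma eq_of_mem_dyadicI {k : ℤ} {n n' : ℕ} {x : ℝ} (h : x ∈ dyadicI k n)
    (h' : x ∈ dyadicI k n') : n = n' :=
  (mem_dyadicI_iff.1 h).2.symm.trans (mem_dyadicI_iff.1 h').2

lemma floor_div_two_zpow_of_le {k k' : ℤ} (hk : k ≤ k') (x : ℝ) :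
    ⌊x / 2 ^ k'⌋₊ = ⌊x / 2 ^ k⌋₊ / 2 ^ (k' - k).toNat := by
  have hscale : (2:ℝ) ^ k' = 2 ^ k * ((2 ^ (k' - k).toNat : ℕ) : ℝ) := by
    rw [Nat.cast_pow, Nat.cast_ofNat, ← zpow_natCast, Int.toNat_of_nonneg (by omega),
      ← zpow_add₀ two_ne_zero, add_sub_cancel]
  rw [← Nat.floor_div_natCast, hscale, div_mul_eq_div_div]

lemma dyadicI_subset_of_mem {k k' : ℤ} {n n' : ℕ} {x : ℝ} (hk : k ≤ k')
    (h : x ∈ dyadicI k n) (h' : x ∈ dyadicI k' n') : dyadicI k n ⊆ dyadicI k' n' := by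
  rw [mem_dyadicI_iff] at h h'
  intro y hy
  rw [mem_dyadicI_iff] at hy ⊢
  refine ⟨hy.1, ?_⟩
  rw [floor_div_two_zpow_of_le hk, hy.2, ← h.2, ← floor_div_two_zpow_of_le hk, h'.2]

lemma dyadicI_injective {k k' : ℤ} {n n' : ℕ} (h : dyadicI k n = dyadicI k' n') :
    k = k' ∧ n = n' := by
  obtain rfl : k = k' := le_antisymm (le_of_dyadicI_subset h.le) (le_of_dyadicI_subset h.ge)
  exact ⟨rfl, eq_of_mem_dyadicI (left_mem_dyadicI k n) (h ▸ left_mem_dyadicI k n)⟩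

lemma image_two_pow_mul_dyadicI (L : ℕ) (k : ℤ) (n : ℕ) :
    (fun y => (2:ℝ) ^ L * y) '' dyadicI k n = dyadicI (L + k) n := by
  rw [dyadicI, image_mul_left_Ico (by positivity), dyadicI, zpow_add₀ two_ne_zero, zpow_natCast,
    mul_assoc, mul_assoc]

lemma two_pow_mul_mem_dyadicI {ξ : ℝ} {k : ℤ} {n : ℕ} (L : ℕ) (h : ξ ∈ dyadicI k n) :
    (2:ℝ) ^ L * ξ ∈ dyadicI (L + k) n :=
  image_two_pow_mul_dyadicI L k n ▸ mem_image_of_mem _ h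

lemma dilate_prod (L : ℕ) (A B : Set ℝ) :
    dilate L (A ×ˢ B) = A ×ˢ ((fun y => (2:ℝ) ^ L * y) '' B) := by
  rw [dilate, ← image_id A, prod_image_image_eq, image_id]
  rfl

namespace Bitile

lemma timeI_eq (P : Bitile) : P.timeI = dyadicI P.k P.n := rfl

lemma freqI_eq (P : Bitile) : P.freqI = dyadicI (1 - P.k) P.l := rfl

lemma k_le_of_timeI_subset {P Q : Bitile} (h : P.timeI ⊆ Q.timeI) : P.k ≤ Q.k :=
  le_of_dyadicI_subset h

lemma exists_mem_freqI (k : ℤ) (n : ℕ) {ξ : ℝ} (hξ : 0 ≤ ξ) :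
    ∃ P : Bitile, P.k = k ∧ P.n = n ∧ ξ ∈ P.freqI :=
  ⟨⟨k, n, ⌊ξ / 2 ^ (1 - k)⌋₊⟩, rfl, rfl, mem_dyadicI_floor hξ _⟩

lemma eq_of_timeI_eq {P Q : Bitile} {ξ : ℝ} (h : P.timeI = Q.timeI) (hP : ξ ∈ P.freqI)
    (hQ : ξ ∈ Q.freqI) : P = Q := by
  obtain ⟨P_k, P_n, P_l⟩ := P
  obtain ⟨Q_k, Q_n, Q_l⟩ := Q
  obtain ⟨rfl, rfl⟩ := dyadicI_injective h
  obtain rfl : P_l = Q_l := eq_of_mem_dyadicI hP hQ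
  rfl

lemma le_of_mem {P Q : Bitile} {x ξ : ℝ} (hk : P.k ≤ Q.k) (hxP : x ∈ P.timeI)
    (hxQ : x ∈ Q.timeI) (hξP : ξ ∈ P.freqI) (hξQ : ξ ∈ Q.freqI) : bitileLE P Q :=
  ⟨dyadicI_subset_of_mem hk hxP hxQ, dyadicI_subset_of_mem (by omega) hξQ hξP⟩

lemma dilate_toSet (L : ℕ) (P : Bitile) :
    dilate L P.toSet = P.timeI ×ˢ dyadicI (L + (1 - P.k)) P.l := by
  rw [toSet, dilate_prod, freqI_eq, image_two_pow_mul_dyadicI]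

end Bitile

namespace Tree

variable {L : ℕ} {T : Tree} {ξ : ℝ}

lemma mem_enlarged_iff {P : Bitile} :
    P ∈ T.enlarged L ξ ↔ (2:ℝ) ^ L * ξ ∈ P.freqI ∧
      ∃ P' ∈ T.carrier, P.timeI ⊆ P'.timeI ∧ P.freqI ⊆ dyadicI (L + (1 - P'.k)) P'.l := by
  have hne : (P.timeI ×ˢ P.freqI).Nonempty :=
    ⟨(_, _), left_mem_dyadicI P.k P.n, left_mem_dyadicI (1 - P.k) P.l⟩
  simp only [enlarged, mem_ofPred_eq, Bitile.dilate_toSet]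
  simp only [Bitile.toSet, prod_subset_prod_iff' hne]

lemma timeI_subset_of_mem_enlarged {P : Bitile} (hP : P ∈ T.enlarged L ξ) :
    P.timeI ⊆ T.top.timeI := by
  obtain ⟨-, P', hP', hPt, -⟩ := mem_enlarged_iff.1 hP
  exact hPt.trans (T.le_top P' hP').1

lemma enlargedSet_eq_iUnion_dilate (hξ : ξ ∈ T.top.freqI) :
    T.enlargedSet L ξ = ⋃ P' ∈ T.carrier, dilate L P'.toSet := by
  refine subset_antisymm (iUnion₂_subset fun P hP => ?_) (iUnion₂_subset fun P' hP' => ?_)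
  · obtain ⟨-, P', hP', hsub⟩ := hP
    exact hsub.trans (subset_biUnion_of_mem (u := fun P' => dilate L P'.toSet) hP')
  · rintro ⟨x, y⟩ hxy
    rw [Bitile.dilate_toSet] at hxy
    set P : Bitile := ⟨P'.k - L, ⌊x / 2 ^ (P'.k - L)⌋₊, P'.l⟩
    have hPk : P.k = P'.k - L := rfl
    have hxP : x ∈ P.timeI := mem_dyadicI_floor (nonneg_of_mem_dyadicI hxy.1) _
    have hPfreq : P.freqI = dyadicI (L + (1 - P'.k)) P'.l := by
      rw [Bitile.freqI_eq, show 1 - P.k = L + (1 - P'.k) by omega]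
    have hP : P ∈ T.enlarged L ξ := by
      refine mem_enlarged_iff.2 ⟨?_, P', hP', dyadicI_subset_of_mem (by omega) hxP hxy.1,
        hPfreq.le⟩
      exact hPfreq ▸ two_pow_mul_mem_dyadicI L ((T.le_top P' hP').2 hξ)
    exact mem_biUnion hP ⟨hxP, hPfreq ▸ hxy.2⟩

lemma mem_of_le_of_le_top (hT : IsConvex T.carrier) {P Q : Bitile} (hP : P ∈ T.carrier)
    (hPQ : bitileLE P Q) (hQ : bitileLE Q T.top) : Q ∈ T.carrier := by
  by_cases hPQ' : P = Q
  · exact hPQ' ▸ hP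
  by_cases hQtop : Q = T.top
  · exact hQtop ▸ T.top_mem
  exact hT P T.top Q hP T.top_mem ⟨hPQ, hPQ'⟩ ⟨hQ, hQtop⟩

lemma isConvex_enlarged (hT : IsConvex T.carrier) (hξ : ξ ∈ T.top.freqI) :
    IsConvex (T.enlarged L ξ) := by
  rintro P₁ P₂ P hP₁ hP₂ ⟨⟨h₁t, -⟩, -⟩ ⟨⟨h₂t, h₂f⟩, -⟩
  obtain ⟨-, P₁', hP₁', h₁t', h₁f'⟩ := mem_enlarged_iff.1 hP₁
  have hPf : (2:ℝ) ^ L * ξ ∈ P.freqI := h₂f (mem_enlarged_iff.1 hP₂).1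
  have hPtop : P.timeI ⊆ T.top.timeI := h₂t.trans (timeI_subset_of_mem_enlarged hP₂)
  have hP₁'top := T.le_top P₁' hP₁'
  have hk₁ : P₁'.k ≤ P₁.k + L := by have := le_of_dyadicI_subset h₁f'; omega
  have hk₁' : P₁.k ≤ P.k := Bitile.k_le_of_timeI_subset h₁t
  set k := max P₁'.k P.k
  set x₀ := (2:ℝ) ^ P.k * P.n
  have hx₀ : x₀ ∈ P.timeI := left_mem_dyadicI P.k P.n
  obtain ⟨Q, hQk, hQn, hξQ⟩ :=
    Bitile.exists_mem_freqI k ⌊x₀ / 2 ^ k⌋₊ (nonneg_of_mem_dyadicI hξ)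
  have hx₀Q : x₀ ∈ Q.timeI := by
    rw [Bitile.timeI_eq, hQk, hQn]; exact mem_dyadicI_floor (nonneg_of_mem_dyadicI hx₀) k
  have hPQ : P.timeI ⊆ Q.timeI := dyadicI_subset_of_mem (by omega) hx₀ hx₀Q
  have hx₁ := left_mem_dyadicI P₁.k P₁.n
  have hQ : Q ∈ T.carrier := by
    refine mem_of_le_of_le_top hT hP₁'
      (Bitile.le_of_mem (by omega) (h₁t' hx₁) (hPQ (h₁t hx₁)) (hP₁'top.2 hξ) hξQ)
      (Bitile.le_of_mem ?_ hx₀Q (hPtop hx₀) hξQ hξ)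
    have := Bitile.k_le_of_timeI_subset hPtop
    have := Bitile.k_le_of_timeI_subset hP₁'top.1
    omega
  refine mem_enlarged_iff.2 ⟨hPf, Q, hQ, hPQ, ?_⟩
  exact dyadicI_subset_of_mem (by omega) hPf (two_pow_mul_mem_dyadicI L hξQ)

lemma exists_mem_enlarged_timeI_eq (hξ : ξ ∈ T.top.freqI) :
    ∃ P ∈ T.enlarged L ξ, P.timeI = T.top.timeI := by
  have hLξ := two_pow_mul_mem_dyadicI L hξ
  obtain ⟨P, hPk, hPn, hPf⟩ :=
    Bitile.exists_mem_freqI T.top.k T.top.n (nonneg_of_mem_dyadicI hLξ)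
  have hPt : P.timeI = T.top.timeI := by rw [Bitile.timeI_eq, hPk, hPn]; rfl
  refine ⟨P, mem_enlarged_iff.2 ⟨hPf, T.top, T.top_mem, hPt.le, ?_⟩, hPt⟩
  exact dyadicI_subset_of_mem (by omega) hPf hLξ

lemma le_of_mem_enlarged {P Q : Bitile} (hP : P ∈ T.enlarged L ξ) (hPt : P.timeI = T.top.timeI)
    (hQ : Q ∈ T.enlarged L ξ) : bitileLE Q P := by
  have hQt := hPt ▸ timeI_subset_of_mem_enlarged hQ
  refine ⟨hQt, dyadicI_subset_of_mem ?_ (mem_enlarged_iff.1 hP).1 (mem_enlarged_iff.1 hQ).1⟩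
  have := Bitile.k_le_of_timeI_subset hQt
  omega

end Tree

/-- Properties of the enlarged tree `T^{(L)}`: convexity, unique maximal element (the
bitile of `T^{(L)}` with time interval `I_T`), and independence of the choice of `ξ ∈ ω_T`. -/
theorem enlarged_tree_properties :
    ∀ L : ℕ, 1 ≤ L → ∀ T : Tree,
      (IsConvex T.carrier → ∀ ξ ∈ T.top.freqI,
        IsConvex (T.enlarged L ξ) ∧
        (∃! P : Bitile, P ∈ T.enlarged L ξ ∧ P.timeI = T.top.timeI) ∧
        (∀ P : Bitile, P ∈ T.enlarged L ξ → P.timeI = T.top.timeI →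
          ∀ Q ∈ T.enlarged L ξ, bitileLE Q P)) ∧
      (∀ ξ ∈ T.top.freqI, ∀ ξ' ∈ T.top.freqI,
        T.enlargedSet L ξ = T.enlargedSet L ξ') := by
  intro L _ T
  refine ⟨fun hT ξ hξ => ⟨T.isConvex_enlarged hT hξ, ?_, fun P hP hPt Q hQ =>
    Tree.le_of_mem_enlarged hP hPt hQ⟩, fun ξ hξ ξ' hξ' => by
      rw [Tree.enlargedSet_eq_iUnion_dilate hξ, Tree.enlargedSet_eq_iUnion_dilate hξ']⟩
  obtain ⟨P, hP, hPt⟩ := T.exists_mem_enlarged_timeI_eq (L := L) hξ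
  refine ⟨P, ⟨hP, hPt⟩, fun Q ⟨hQ, hQt⟩ => ?_⟩
  exact Bitile.eq_of_timeI_eq (hQt.trans hPt.symm) (Tree.mem_enlarged_iff.1 hQ).1
    (Tree.mem_enlarged_iff.1 hP).1

end Quartile
end
end

section
/- (Multi-frequency Calderón–Zygmund estimate) Let 0 < ε < 1/2, let I be a dyadic interval, and let 𝔭 be a collection of at most N pairwise disjoint tiles, each with time interval equal to I. For g ∈ L^{1/(1−ε)}([0,∞)), let a = Σ_{p∈𝔭} ⟨g, w_p⟩ w_p be the orthogonal projection of g onto the span of the wave packets {w_p : p ∈ 𝔭}. Then ‖a‖_{L^2}^2 = Σ_{p∈𝔭} |⟨g, w_p⟩|^2 ≤ N^{1−2ε} ‖g·1_I‖_{L^{1/(1−ε)}}^2 |I|^{2ε−1}. -/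
open MeasureTheory Set ENNReal NNReal

noncomputable section

namespace Quartile

/-! Distinct tiles with a common time interval `I` have orthonormal wave packets bounded by
`|I|^{-1/2}`. Write `A = Σ_p |⟨g, w_p⟩|² = ‖a‖₂²`. Then `A = ⟨g 1_I, a⟩ ≤ ‖g 1_I‖_q ‖a‖_{q'}`
by Hölder with `q' = 1/ε`, while Cauchy–Schwarz on the coefficients gives
`‖a‖_∞ ≤ (N A / |I|)^{1/2}`. Interpolating between `L²` and `L^∞`,
`‖a‖_{q'} ≤ ‖a‖_∞^{1-2ε} ‖a‖₂^{2ε} ≤ (N / |I|)^{1/2-ε} A^{1/2}`, and dividing by `A^{1/2}`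
gives the estimate. -/

lemma ofReal_sum_norm_sq {ι E : Type*} [SeminormedAddGroup E] (s : Finset ι) (c : ι → E) :
    ENNReal.ofReal (∑ i ∈ s, ‖c i‖ ^ 2) = ∑ i ∈ s, ‖c i‖ₑ ^ 2 := by
  rw [ENNReal.ofReal_sum_of_nonneg fun i _ => by positivity]
  simp_rw [ENNReal.ofReal_pow (norm_nonneg _), ofReal_norm]

lemma sq_sum_enorm_le_card_mul {ι E : Type*} [SeminormedAddGroup E] (s : Finset ι) (c : ι → E) :
    (∑ i ∈ s, ‖c i‖ₑ) ^ 2 ≤ s.card * ∑ i ∈ s, ‖c i‖ₑ ^ 2 := by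
  simp only [enorm_eq_nnnorm]
  exact_mod_cast sq_sum_le_card_mul_sum_sq (s := s) (f := fun i => ‖c i‖₊)

lemma le_rpow_mul_sq_of_le_mul_rpow {A B G K : ℝ≥0∞} {ε : ℝ} (hε : ε ≤ 1 / 2) (hA : A ≠ ∞)
    (hB : B ^ 2 ≤ K * A) (h : A ≤ G * (B ^ (1 - 2 * ε) * A ^ ε)) :
    A ≤ K ^ (1 - 2 * ε) * G ^ 2 := by
  rcases eq_or_ne A 0 with rfl | hA0
  · simp
  have hθ : 0 ≤ (1 - 2 * ε) / 2 := by linarith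
  have hBK : B ^ (1 - 2 * ε) ≤ K ^ ((1 - 2 * ε) / 2) * A ^ ((1 - 2 * ε) / 2) := by
    calc B ^ (1 - 2 * ε) = (B ^ 2) ^ ((1 - 2 * ε) / 2) := by
          rw [← ENNReal.rpow_natCast, ← ENNReal.rpow_mul]; congr 1; push_cast; ring
      _ ≤ (K * A) ^ ((1 - 2 * ε) / 2) := by gcongr
      _ = _ := ENNReal.mul_rpow_of_nonneg _ _ hθ
  have hsqrt : A ^ (1 / 2 : ℝ) ≤ G * K ^ ((1 - 2 * ε) / 2) := by
    have hpos : A ^ (1 / 2 : ℝ) ≠ 0 := by simp [hA0, hA]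
    have hfin : A ^ (1 / 2 : ℝ) ≠ ∞ := by simp [hA]
    refine (ENNReal.mul_le_mul_iff_left hpos hfin).1 ?_
    calc A ^ (1 / 2 : ℝ) * A ^ (1 / 2 : ℝ) = A := by
          rw [← ENNReal.rpow_add _ _ hA0 hA]; norm_num
      _ ≤ G * (K ^ ((1 - 2 * ε) / 2) * A ^ ((1 - 2 * ε) / 2) * A ^ ε) := by
          refine h.trans ?_; gcongr
      _ = G * K ^ ((1 - 2 * ε) / 2) * A ^ (1 / 2 : ℝ) := by
          rw [mul_assoc (K ^ _), ← ENNReal.rpow_add _ _ hA0 hA, ← mul_assoc]; ring_nf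
  calc A = (A ^ (1 / 2 : ℝ)) ^ 2 := by
        rw [← ENNReal.rpow_natCast, ← ENNReal.rpow_mul]; norm_num
    _ ≤ (G * K ^ ((1 - 2 * ε) / 2)) ^ 2 := by gcongr
    _ = K ^ (1 - 2 * ε) * G ^ 2 := by
        rw [mul_pow, ← ENNReal.rpow_natCast (K ^ _), ← ENNReal.rpow_mul]; ring_nf

lemma integral_comp_mul_sub {E : Type*} [NormedAddCommGroup E] [NormedSpace ℝ E] (f : ℝ → E)
    (a b : ℝ) : ∫ x, f (a * x - b) = |a⁻¹| • ∫ y, f y := by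
  rw [Measure.integral_comp_mul_left (fun y => f (y - b)), integral_sub_right_eq_self]

section Lp

variable {α E : Type*} [MeasurableSpace α] {μ : Measure α} [NormedAddCommGroup E]

lemma eLpNorm_le_eLpNorm_top_rpow_mul_eLpNorm_two_rpow {f : α → E}
    (hf : AEStronglyMeasurable f μ) {p : ℝ} (hp : 2 ≤ p) :
    eLpNorm f (ENNReal.ofReal p) μ ≤ eLpNorm f ∞ μ ^ (1 - 2 / p) * eLpNorm f 2 μ ^ (2 / p) := by
  have hp0 : 0 < p := by linarith
  set S := eLpNormEssSup f μ
  have hlint : ∫⁻ x, ‖f x‖ₑ ^ p ∂μ ≤ S ^ (p - 2) * ∫⁻ x, ‖f x‖ₑ ^ (2 : ℝ) ∂μ := by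
    rw [← lintegral_const_mul'' _ (hf.enorm.pow_const _)]
    refine lintegral_mono_ae ((enorm_ae_le_eLpNormEssSup f μ).mono fun x hx => ?_)
    calc ‖f x‖ₑ ^ p = ‖f x‖ₑ ^ (p - 2) * ‖f x‖ₑ ^ (2 : ℝ) := by
          rw [← ENNReal.rpow_add_of_nonneg _ _ (by linarith) zero_le_two, sub_add_cancel]
      _ ≤ S ^ (p - 2) * ‖f x‖ₑ ^ (2 : ℝ) := by gcongr
  rw [eLpNorm_eq_lintegral_rpow_enorm_toReal (by simpa using hp0) ofReal_ne_top,
    eLpNorm_eq_lintegral_rpow_enorm_toReal two_ne_zero ofNat_ne_top, eLpNorm_exponent_top,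
    toReal_ofReal hp0.le, toReal_ofNat, ← ENNReal.rpow_mul]
  calc (∫⁻ x, ‖f x‖ₑ ^ p ∂μ) ^ (1 / p)
      ≤ (S ^ (p - 2) * ∫⁻ x, ‖f x‖ₑ ^ (2 : ℝ) ∂μ) ^ (1 / p) := by gcongr
    _ = _ := by
      rw [ENNReal.mul_rpow_of_nonneg _ _ (by positivity), ← ENNReal.rpow_mul]
      congr 2 <;> field_simp

lemma memLp_ofReal_of_memLp_two_of_bound {f : α → E} (hf : MemLp f 2 μ) {M : ℝ}
    (hM : ∀ x, ‖f x‖ ≤ M) {p : ℝ} (hp : 2 ≤ p) : MemLp f (ENNReal.ofReal p) μ := by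
  have htop : MemLp f ∞ μ := memLp_top_of_bound hf.1 M (ae_of_all _ hM)
  have hp0 : 0 < p := by linarith
  refine ⟨hf.1, (eLpNorm_le_eLpNorm_top_rpow_mul_eLpNorm_two_rpow hf.1 hp).trans_lt ?_⟩
  exact ENNReal.mul_lt_top
    (ENNReal.rpow_lt_top_of_nonneg (by rw [sub_nonneg, div_le_one hp0]; exact hp) htop.2.ne)
    (ENNReal.rpow_lt_top_of_nonneg (by positivity) hf.2.ne)

end Lp

section OrthonormalSystem

open ComplexConjugate

variable {α ι : Type*} {s : Finset ι} {e : ι → α → ℝ}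

lemma enorm_sum_mul_le {M : ℝ} (hbound : ∀ i ∈ s, ∀ x, ‖e i x‖ ≤ M) (c : ι → ℂ) (x : α) :
    ‖∑ i ∈ s, c i * (e i x : ℂ)‖ₑ ≤ ENNReal.ofReal M * ∑ i ∈ s, ‖c i‖ₑ := by
  rw [Finset.mul_sum]
  refine (enorm_sum_le _ _).trans (Finset.sum_le_sum fun i hi => ?_)
  rw [enorm_mul, mul_comm, ← ofReal_norm, Complex.norm_real]
  gcongr
  exact hbound i hi x

variable [MeasurableSpace α] {μ : Measure α}

lemma enorm_integral_mul_conj_le {p q : ℝ≥0∞} [p.HolderConjugate q] {f g : α → ℂ}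
    (hf : AEStronglyMeasurable f μ) (hg : AEStronglyMeasurable g μ) :
    ‖∫ x, f x * conj (g x) ∂μ‖ₑ ≤ eLpNorm f p μ * eLpNorm g q μ := by
  calc ‖∫ x, f x * conj (g x) ∂μ‖ₑ ≤ eLpNorm (fun x => f x * conj (g x)) 1 μ := by
        rw [eLpNorm_one_eq_lintegral_enorm]
        exact enorm_integral_le_lintegral_enorm _
    _ ≤ 1 * eLpNorm f p μ * eLpNorm g q μ :=
        eLpNorm_le_eLpNorm_mul_eLpNorm'_of_norm hf hg (fun u v => u * conj v) 1
          (ae_of_all _ fun x => by simp)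
    _ = _ := by simp

lemma integral_norm_sum_mul_sq (he : ∀ i ∈ s, MemLp (e i) 2 μ)
    (hnorm : ∀ i ∈ s, ∫ x, e i x * e i x ∂μ = 1)
    (horth : (s : Set ι).Pairwise fun i j => ∫ x, e i x * e j x ∂μ = 0) (c : ι → ℂ) :
    ∫ x, ‖∑ i ∈ s, c i * (e i x : ℂ)‖ ^ 2 ∂μ = ∑ i ∈ s, ‖c i‖ ^ 2 := by
  have hint : ∀ i ∈ s, ∀ j ∈ s, Integrable (fun x => e i x * e j x) μ :=
    fun i hi j hj => (he i hi).integrable_mul (he j hj)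
  have hexpand : ∀ x, ((‖∑ i ∈ s, c i * (e i x : ℂ)‖ ^ 2 : ℝ) : ℂ) =
      ∑ i ∈ s, ∑ j ∈ s, conj (c i) * c j * ((e i x * e j x : ℝ) : ℂ) := fun x => by
    rw [Complex.ofReal_pow, ← Complex.conj_mul', map_sum, Finset.sum_mul_sum]
    simp only [map_mul, Complex.conj_ofReal, Complex.ofReal_mul]
    exact Finset.sum_congr rfl fun i _ => Finset.sum_congr rfl fun j _ => by ring
  have hdiag : ∀ i ∈ s, ∑ j ∈ s, conj (c i) * c j * ((∫ x, e i x * e j x ∂μ : ℝ) : ℂ) =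
      ((‖c i‖ ^ 2 : ℝ) : ℂ) := fun i hi => by
    rw [Finset.sum_eq_single i (fun j hj hji => by rw [horth hi hj hji.symm]; simp)
      (fun h => absurd hi h), hnorm i hi, Complex.ofReal_one, mul_one, Complex.conj_mul',
      Complex.ofReal_pow]
  apply Complex.ofReal_injective
  rw [← integral_complex_ofReal, funext hexpand, integral_finsetSum _ fun i hi =>
    integrable_finsetSum _ fun j hj => (hint i hi j hj).ofReal.const_mul _]
  rw [Complex.ofReal_sum]
  refine Finset.sum_congr rfl fun i hi => ?_
  rw [integral_finsetSum _ fun j hj => (hint i hi j hj).ofReal.const_mul _, ← hdiag i hi]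
  exact Finset.sum_congr rfl fun j _ => by rw [integral_const_mul, integral_complex_ofReal]

lemma eLpNorm_sum_mul_sq (he : ∀ i ∈ s, MemLp (e i) 2 μ)
    (hnorm : ∀ i ∈ s, ∫ x, e i x * e i x ∂μ = 1)
    (horth : (s : Set ι).Pairwise fun i j => ∫ x, e i x * e j x ∂μ = 0) (c : ι → ℂ) :
    eLpNorm (fun x => ∑ i ∈ s, c i * (e i x : ℂ)) 2 μ ^ 2 = ∑ i ∈ s, ‖c i‖ₑ ^ 2 := by
  have hmem : MemLp (fun x => ∑ i ∈ s, c i * (e i x : ℂ)) 2 μ :=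
    memLp_finsetSum s fun i hi => (he i hi).ofReal.const_mul (c i)
  rw [hmem.eLpNorm_eq_integral_rpow_norm two_ne_zero ofNat_ne_top, toReal_ofNat]
  simp only [Real.rpow_two]
  rw [integral_norm_sum_mul_sq he hnorm horth, ← ENNReal.ofReal_pow (by positivity),
    ← one_div, ← Real.sqrt_eq_rpow, Real.sq_sqrt (by positivity), ofReal_sum_norm_sq]

lemma integral_mul_conj_sum {g : α → ℂ} (hint : ∀ i ∈ s, Integrable (fun x => g x * e i x) μ)
    (d : ι → ℂ) :
    ∫ x, g x * conj (∑ i ∈ s, d i * (e i x : ℂ)) ∂μ =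
      ∑ i ∈ s, conj (d i) * ∫ x, g x * e i x ∂μ := by
  simp_rw [map_sum, map_mul, Complex.conj_ofReal, Finset.mul_sum, mul_left_comm (g _)]
  rw [integral_finsetSum _ fun i hi => (hint i hi).const_mul (conj (d i))]
  simp_rw [integral_const_mul]

theorem sum_enorm_integral_mul_sq_le {ε : ℝ} (hε : 0 < ε) (hε2 : ε ≤ 1 / 2) {M : ℝ}
    (he : ∀ i ∈ s, MemLp (e i) 2 μ) (hbound : ∀ i ∈ s, ∀ x, ‖e i x‖ ≤ M)
    (hnorm : ∀ i ∈ s, ∫ x, e i x * e i x ∂μ = 1)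
    (horth : (s : Set ι).Pairwise fun i j => ∫ x, e i x * e j x ∂μ = 0) {g : α → ℂ}
    (hg : MemLp g (ENNReal.ofReal (1 / (1 - ε))) μ) :
    ∑ i ∈ s, ‖∫ x, g x * e i x ∂μ‖ₑ ^ 2 ≤ (s.card * ENNReal.ofReal M ^ 2) ^ (1 - 2 * ε) *
      eLpNorm g (ENNReal.ofReal (1 / (1 - ε))) μ ^ 2 := by
  have hq' : 2 ≤ 1 / ε := by rw [le_div_iff₀ hε]; linarith
  have := (Real.holderConjugate_one_div (by linarith : 0 < 1 - ε) hε (by ring)).ennrealOfReal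
  have h2ε : 2 / (1 / ε) = 2 * ε := by field_simp
  have he' : ∀ i ∈ s, MemLp (e i) (ENNReal.ofReal (1 / ε)) μ :=
    fun i hi => memLp_ofReal_of_memLp_two_of_bound (he i hi) (hbound i hi) hq'
  set c : ι → ℂ := fun i => ∫ x, g x * e i x ∂μ
  set a : α → ℂ := fun x => ∑ i ∈ s, c i * (e i x : ℂ)
  set A := ∑ i ∈ s, ‖c i‖ₑ ^ 2
  set B := ENNReal.ofReal M * ∑ i ∈ s, ‖c i‖ₑ
  have ha : MemLp a 2 μ := memLp_finsetSum s fun i hi => (he i hi).ofReal.const_mul (c i)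
  have hint : ∀ i ∈ s, Integrable (fun x => g x * (e i x : ℂ)) μ :=
    fun i hi => hg.integrable_mul (he' i hi).ofReal
  have hA : ‖∫ x, g x * conj (a x) ∂μ‖ₑ = A := by
    simp only [a, integral_mul_conj_sum hint c]
    change ‖∑ i ∈ s, conj (c i) * c i‖ₑ = A
    simp_rw [Complex.conj_mul', ← Complex.ofReal_pow, ← Complex.ofReal_sum, ← ofReal_norm,
      Complex.norm_real, Real.norm_of_nonneg (by positivity : (0 : ℝ) ≤ ∑ i ∈ s, ‖c i‖ ^ 2)]
    exact ofReal_sum_norm_sq s c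
  have hL2 : eLpNorm a 2 μ ^ 2 = A := eLpNorm_sum_mul_sq he hnorm horth c
  have hsup : eLpNorm a ∞ μ ≤ B := by
    rw [eLpNorm_exponent_top]
    exact eLpNormEssSup_le_of_ae_enorm_bound (ae_of_all _ (enorm_sum_mul_le hbound c))
  have hB : B ^ 2 ≤ s.card * ENNReal.ofReal M ^ 2 * A := by
    rw [mul_pow, mul_comm (s.card : ℝ≥0∞), mul_assoc]
    gcongr
    exact sq_sum_enorm_le_card_mul s c
  refine le_rpow_mul_sq_of_le_mul_rpow hε2 (by simp [A]) hB ?_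
  calc A ≤ eLpNorm g (ENNReal.ofReal (1 / (1 - ε))) μ * eLpNorm a (ENNReal.ofReal (1 / ε)) μ :=
        hA ▸ enorm_integral_mul_conj_le hg.1 ha.1
    _ ≤ _ := by
        gcongr
        refine (eLpNorm_le_eLpNorm_top_rpow_mul_eLpNorm_two_rpow ha.1 hq').trans ?_
        rw [h2ε, ENNReal.rpow_mul, ENNReal.rpow_two, hL2]
        gcongr
        linarith

end OrthonormalSystem

section Walsh

lemma walsh_zero_apply (x : ℝ) : walsh 0 x = (Ico (0 : ℝ) 1).indicator 1 x := by
  rw [walsh.eq_def]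
  simp [indicator_apply]

lemma walsh_apply (n : ℕ) (x : ℝ) :
    walsh n x = walsh (n / 2) (2 * x) + (-1) ^ n * walsh (n / 2) (2 * x - 1) := by
  rcases eq_or_ne n 0 with rfl | hn
  · simp only [Nat.zero_div, pow_zero, one_mul, walsh_zero_apply, indicator_apply, mem_Ico,
      Pi.one_apply]
    split_ifs <;> grind
  rw [walsh.eq_def]
  rcases Nat.even_or_odd n with h | h
  · simp [hn, Nat.even_iff.mp h, h.neg_one_pow]
  · simp [hn, Nat.odd_iff.mp h, h.neg_one_pow, sub_eq_add_neg]

lemma walsh_eq_zero_of_notMem {n : ℕ} {x : ℝ} (hx : x ∉ Ico (0 : ℝ) 1) : walsh n x = 0 := by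
  induction n using Nat.strong_induction_on generalizing x with
  | _ n ih =>
    rcases eq_or_ne n 0 with rfl | hn
    · simp [walsh_zero_apply, hx]
    have hlt := Nat.div_lt_self (Nat.pos_of_ne_zero hn) one_lt_two
    simp only [mem_Ico, not_and_or, not_le, not_lt] at hx
    rw [walsh_apply, ih _ hlt, ih _ hlt, mul_zero, add_zero] <;>
      exact fun h => by rcases hx with hx | hx <;> linarith [h.1, h.2]

lemma walsh_apply_of_lt_half (n : ℕ) {x : ℝ} (hx : x < 1 / 2) :
    walsh n x = walsh (n / 2) (2 * x) := by
  rw [walsh_apply, walsh_eq_zero_of_notMem (fun h : 2 * x - 1 ∈ Ico (0 : ℝ) 1 => by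
    linarith [h.1]), mul_zero, add_zero]

lemma walsh_apply_of_half_le (n : ℕ) {x : ℝ} (hx : 1 / 2 ≤ x) :
    walsh n x = (-1) ^ n * walsh (n / 2) (2 * x - 1) := by
  rw [walsh_apply, walsh_eq_zero_of_notMem (fun h : 2 * x ∈ Ico (0 : ℝ) 1 => by
    linarith [h.2]), zero_add]

lemma abs_walsh_le_one (n : ℕ) (x : ℝ) : |walsh n x| ≤ 1 := by
  induction n using Nat.strong_induction_on generalizing x with
  | _ n ih =>
    rcases eq_or_ne n 0 with rfl | hn
    · rw [walsh_zero_apply]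
      by_cases hx : x ∈ Ico (0 : ℝ) 1 <;> simp [hx]
    have hlt := Nat.div_lt_self (Nat.pos_of_ne_zero hn) one_lt_two
    rcases lt_or_ge x (1 / 2) with hx | hx
    · rw [walsh_apply_of_lt_half n hx]
      exact ih _ hlt _
    · rw [walsh_apply_of_half_le n hx, abs_mul, abs_pow, abs_neg, abs_one, one_pow, one_mul]
      exact ih _ hlt _

lemma measurable_walsh (n : ℕ) : Measurable (walsh n) := by
  induction n using Nat.strong_induction_on with
  | _ n ih =>
    rcases eq_or_ne n 0 with rfl | hn
    · rw [funext walsh_zero_apply]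
      exact measurable_one.indicator measurableSet_Ico
    have hlt := Nat.div_lt_self (Nat.pos_of_ne_zero hn) one_lt_two
    rw [funext (walsh_apply n)]
    exact ((ih _ hlt).comp (measurable_const_mul 2)).add
      (((ih _ hlt).comp ((measurable_const_mul 2).sub_const 1)).const_mul _)

lemma integrable_walsh (n : ℕ) : Integrable (walsh n) := by
  refine Integrable.mono' (g := (Ico (0 : ℝ) 1).indicator 1)
    ((integrable_indicator_iff measurableSet_Ico).2 (integrableOn_const measure_Ico_lt_top.ne))
    (measurable_walsh n).aestronglyMeasurable (ae_of_all _ fun x => ?_)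
  by_cases hx : x ∈ Ico (0 : ℝ) 1
  · simpa [hx] using abs_walsh_le_one n x
  · simp [hx, walsh_eq_zero_of_notMem hx]

lemma integrable_walsh_mul_walsh (a b : ℕ) : Integrable fun x => walsh a x * walsh b x :=
  (integrable_walsh a).mul_bdd (measurable_walsh b).aestronglyMeasurable
    (ae_of_all _ fun x => (Real.norm_eq_abs _).trans_le (abs_walsh_le_one b x))

lemma walsh_mul_walsh_apply (a b : ℕ) (x : ℝ) :
    walsh a x * walsh b x = walsh (a / 2) (2 * x) * walsh (b / 2) (2 * x) +
      (-1) ^ (a + b) * (walsh (a / 2) (2 * x - 1) * walsh (b / 2) (2 * x - 1)) := by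
  rcases lt_or_ge x (1 / 2) with hx | hx
  · have h : 2 * x - 1 ∉ Ico (0 : ℝ) 1 := fun h => by linarith [h.1]
    rw [walsh_apply_of_lt_half a hx, walsh_apply_of_lt_half b hx, walsh_eq_zero_of_notMem h]
    ring
  · have h : 2 * x ∉ Ico (0 : ℝ) 1 := fun h => by linarith [h.2]
    rw [walsh_apply_of_half_le a hx, walsh_apply_of_half_le b hx, walsh_eq_zero_of_notMem h]
    ring

lemma integral_walsh_mul_walsh (a b : ℕ) :
    ∫ x, walsh a x * walsh b x = if a = b then 1 else 0 := by
  induction h : a + b using Nat.strong_induction_on generalizing a b with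
  | _ m ih =>
    subst h
    by_cases hab : a = 0 ∧ b = 0
    · obtain ⟨rfl, rfl⟩ := hab
      simp [walsh_zero_apply, ← indicator_mul_left, integral_indicator measurableSet_Ico]
    have hhalf := ih (a / 2 + b / 2) (by omega) (a / 2) (b / 2) rfl
    have hf := integrable_walsh_mul_walsh (a / 2) (b / 2)
    rw [funext (walsh_mul_walsh_apply a b), integral_add (hf.comp_mul_left' two_ne_zero)
      (((hf.comp_sub_right 1).comp_mul_left' two_ne_zero).const_mul _), integral_const_mul,
      Measure.integral_comp_mul_left (fun y => walsh (a / 2) y * walsh (b / 2) y),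
      integral_comp_mul_sub (fun y => walsh (a / 2) y * walsh (b / 2) y), hhalf]
    rcases Nat.even_or_odd (a + b) with hp | hp
    · have : a = b ↔ a / 2 = b / 2 := by rw [Nat.even_add, Nat.even_iff, Nat.even_iff] at hp; omega
      simp only [hp.neg_one_pow, this]
      split_ifs <;> norm_num
    · have : a ≠ b := by rintro rfl; exact Nat.not_even_iff_odd.2 hp (by simp)
      rw [hp.neg_one_pow, if_neg this]
      split_ifs <;> norm_num

end Walsh

namespace Tile

lemma mem_timeI_iff {p : Tile} {x : ℝ} :
    x ∈ p.timeI ↔ (2 : ℝ) ^ (-p.k) * x - p.n ∈ Ico (0 : ℝ) 1 := by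
  have h : (0 : ℝ) < 2 ^ p.k := _root_.zpow_pos two_pos _
  simp only [timeI, mem_Ico, zpow_neg, ← div_eq_inv_mul, sub_nonneg, sub_lt_iff_lt_add,
    le_div_iff₀ h, div_lt_iff₀ h]
  constructor <;> rintro ⟨h1, h2⟩ <;> constructor <;> linarith

lemma wp_eq_zero_of_notMem {p : Tile} {x : ℝ} (hx : x ∉ p.timeI) : p.wp x = 0 := by
  rw [wp, walsh_eq_zero_of_notMem (mem_timeI_iff.not.mp hx), mul_zero]

lemma abs_wp_le (p : Tile) (x : ℝ) : |p.wp x| ≤ √((2 : ℝ) ^ (-p.k)) := by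
  rw [wp, abs_mul, abs_of_nonneg (Real.sqrt_nonneg _)]
  exact mul_le_of_le_one_right (Real.sqrt_nonneg _) (abs_walsh_le_one _ _)

lemma measurable_wp (p : Tile) : Measurable p.wp :=
  ((measurable_walsh p.l).comp ((measurable_const_mul _).sub_const _)).const_mul _

lemma k_eq_and_n_eq_of_timeI_eq {p q : Tile} (h : p.timeI = q.timeI) : p.k = q.k ∧ p.n = q.n := by
  have hp : (0 : ℝ) < 2 ^ p.k := _root_.zpow_pos two_pos _
  rw [timeI, timeI, Ico_eq_Ico_iff (Or.inl (by nlinarith))] at h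
  obtain ⟨h1, h2⟩ := h
  have hk : (2 : ℝ) ^ p.k = 2 ^ q.k := by linarith
  refine ⟨zpow_right_injective₀ two_pos (by norm_num) hk, ?_⟩
  rw [hk] at h1
  exact_mod_cast mul_left_cancel₀ (_root_.zpow_pos two_pos q.k).ne' h1

lemma wp_mul_wp_of_timeI_eq {p q : Tile} (h : p.timeI = q.timeI) (x : ℝ) :
    p.wp x * q.wp x = 2 ^ (-p.k) *
      (walsh p.l (2 ^ (-p.k) * x - p.n) * walsh q.l (2 ^ (-p.k) * x - p.n)) := by
  obtain ⟨hk, hn⟩ := k_eq_and_n_eq_of_timeI_eq h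
  rw [wp, wp, ← hk, ← hn, mul_mul_mul_comm, Real.mul_self_sqrt (_root_.zpow_pos two_pos _).le]

lemma integral_wp_mul_wp_of_timeI_eq {p q : Tile} (h : p.timeI = q.timeI) :
    ∫ x, p.wp x * q.wp x = if p.l = q.l then 1 else 0 := by
  have hk : (0 : ℝ) < 2 ^ (-p.k) := _root_.zpow_pos two_pos _
  rw [funext (wp_mul_wp_of_timeI_eq h), integral_const_mul,
    integral_comp_mul_sub (fun y => walsh p.l y * walsh q.l y), integral_walsh_mul_walsh,
    abs_of_pos (inv_pos.2 hk), smul_eq_mul, mul_inv_cancel_left₀ hk.ne']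

lemma integral_wp_mul_self (p : Tile) : ∫ x, p.wp x * p.wp x = 1 := by
  simp [integral_wp_mul_wp_of_timeI_eq rfl]

lemma integral_wp_mul_wp_of_ne {p q : Tile} (h : p.timeI = q.timeI) (hpq : p ≠ q) :
    ∫ x, p.wp x * q.wp x = 0 := by
  obtain ⟨hk, hn⟩ := k_eq_and_n_eq_of_timeI_eq h
  rw [integral_wp_mul_wp_of_timeI_eq h, if_neg]
  exact fun hl => hpq (by cases p; cases q; simp_all)

lemma memLp_wp (p : Tile) (r : ℝ≥0∞) : MemLp p.wp r volume :=
  have htop : MemLp p.wp ∞ volume := memLp_top_of_bound p.measurable_wp.aestronglyMeasurable _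
    (ae_of_all _ fun x => (Real.norm_eq_abs _).trans_le (p.abs_wp_le x))
  htop.mono_exponent_of_measure_support_ne_top (fun _ hx => wp_eq_zero_of_notMem hx)
    (by simp [timeI]) le_top

lemma coef_eq_integral_indicator_mul (g : ℝ → ℂ) (p : Tile) :
    coef g p = ∫ x, p.timeI.indicator g x * p.wp x := by
  refine integral_congr_ae (ae_of_all _ fun x => ?_)
  by_cases hx : x ∈ p.timeI
  · simp [hx]
  · simp [hx, wp_eq_zero_of_notMem hx]

end Tile

lemma volume_dyadicI (k : ℤ) (n : ℕ) : volume (dyadicI k n) = ENNReal.ofReal (2 ^ k) := by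
  rw [dyadicI, Real.volume_Ico]
  ring_nf

/-- The multi-frequency Calderón-Zygmund estimate: for at most `N` pairwise disjoint
tiles with common time interval `I`, the projection `a` of `g` onto the span of the
corresponding wave packets satisfies
`‖a‖₂² = Σ_p |⟨g, w_p⟩|² ≤ N^{1-2ε} ‖g 1_I‖_{1/(1-ε)}² |I|^{2ε-1}`. -/
theorem multi_frequency_CZ :
    ∀ ε : ℝ, 0 < ε → ε < 1/2 →
    ∀ (k : ℤ) (n : ℕ) (𝔭 : Finset Tile) (N : ℕ), 𝔭.card ≤ N →
      (∀ p ∈ 𝔭, p.timeI = dyadicI k n) →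
      (↑𝔭 : Set Tile).PairwiseDisjoint Tile.toSet →
      ∀ g : ℝ → ℂ, MemLp g (ENNReal.ofReal (1/(1-ε))) volume → (∀ x < (0:ℝ), g x = 0) →
        eLpNorm (fun x => ∑ p ∈ 𝔭, projT p g x) 2 volume ^ 2 =
          ∑ p ∈ 𝔭, (‖coef g p‖₊ : ℝ≥0∞) ^ 2 ∧
        ∑ p ∈ 𝔭, (‖coef g p‖₊ : ℝ≥0∞) ^ 2 ≤
          (N : ℝ≥0∞) ^ ((1:ℝ) - 2*ε) *
            eLpNorm ((dyadicI k n).indicator g) (ENNReal.ofReal (1/(1-ε))) volume ^ 2 *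
            volume (dyadicI k n) ^ (2*ε - 1) := by
  intro ε hε hε2 k n 𝔭 N hcard htime _ g hg _
  have hnorm : ∀ p ∈ 𝔭, ∫ x, p.wp x * p.wp x = 1 := fun p _ => p.integral_wp_mul_self
  have horth : (𝔭 : Set Tile).Pairwise fun p q => ∫ x, p.wp x * q.wp x = 0 :=
    fun p hp q hq => Tile.integral_wp_mul_wp_of_ne ((htime p hp).trans (htime q hq).symm)
  refine ⟨eLpNorm_sum_mul_sq (fun p _ => p.memLp_wp 2) hnorm horth _, ?_⟩
  have hbound : ∀ p ∈ 𝔭, ∀ x, ‖p.wp x‖ ≤ √((2 : ℝ) ^ (-k)) := fun p hp x => by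
    have hk : p.k = k := (Tile.k_eq_and_n_eq_of_timeI_eq (q := ⟨k, n, 0⟩) (htime p hp)).1
    exact hk ▸ p.abs_wp_le x
  calc ∑ p ∈ 𝔭, (‖coef g p‖₊ : ℝ≥0∞) ^ 2
      = ∑ p ∈ 𝔭, ‖∫ x, (dyadicI k n).indicator g x * p.wp x‖ₑ ^ 2 :=
        Finset.sum_congr rfl fun p hp => by
          rw [Tile.coef_eq_integral_indicator_mul, htime p hp, enorm_eq_nnnorm]
    _ ≤ (𝔭.card * ENNReal.ofReal √((2 : ℝ) ^ (-k)) ^ 2) ^ (1 - 2 * ε) *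
          eLpNorm ((dyadicI k n).indicator g) (ENNReal.ofReal (1 / (1 - ε))) volume ^ 2 :=
        sum_enorm_integral_mul_sq_le hε hε2.le (fun p _ => p.memLp_wp 2) hbound hnorm horth
          (hg.indicator measurableSet_Ico)
    _ ≤ _ := by
        rw [← ENNReal.ofReal_pow (Real.sqrt_nonneg _), Real.sq_sqrt (by positivity),
          volume_dyadicI, zpow_neg, ENNReal.ofReal_inv_of_pos (by positivity),
          ENNReal.mul_rpow_of_nonneg _ _ (by linarith), ENNReal.inv_rpow, ← ENNReal.rpow_neg,
          neg_sub, mul_right_comm]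
        gcongr
        linarith

end Quartile
end
end
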